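/- arXiv:2106.04475 — 3 statements merged into one kernel-verified Lean document; each statement's English description precedes it below -/
import Mathlib

section
/- In a contextual category, two parallel morphisms γ, δ : Δ → Γ are equal if x[γ] = x[δ] for every variable x of Γ, where variables are the terms of the form x_Γ[π] for π a composite of display maps. -/
open CategoryTheory

universe w w' v u

/-- A category with families. -/
structure CwF (C : Type u) [Category.{v} C] where
  Ty : C → Type w
  tySub : {Δ Γ : C} → Ty Γ → (Δ ⟶ Γ) → Ty Δ
  tySub_id : ∀ {Γ : C} (A : Ty Γ), tySub A (𝟙 Γ) = A
  tySub_comp : ∀ {Θ Δ Γ : C} (A : Ty Γ) (γ : Δ ⟶ Γ) (δ : Θ ⟶ Δ),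
    tySub A (δ ≫ γ) = tySub (tySub A γ) δ
  Tm : (Γ : C) → Ty Γ → Type w'
  tmSub : {Δ Γ : C} → {A : Ty Γ} → Tm Γ A → (γ : Δ ⟶ Γ) → Tm Δ (tySub A γ)
  tmSub_id : ∀ {Γ : C} {A : Ty Γ} (t : Tm Γ A), HEq (tmSub t (𝟙 Γ)) t
  tmSub_comp : ∀ {Θ Δ Γ : C} {A : Ty Γ} (t : Tm Γ A) (γ : Δ ⟶ Γ) (δ : Θ ⟶ Δ),
    HEq (tmSub t (δ ≫ γ)) (tmSub (tmSub t γ) δ)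
  nil : C
  nil_terminal : Nonempty (Limits.IsTerminal nil)
  ext : (Γ : C) → Ty Γ → C
  π : (Γ : C) → (A : Ty Γ) → (ext Γ A ⟶ Γ)
  v : (Γ : C) → (A : Ty Γ) → Tm (ext Γ A) (tySub A (π Γ A))
  pair : {Δ Γ : C} → {A : Ty Γ} → (γ : Δ ⟶ Γ) → Tm Δ (tySub A γ) → (Δ ⟶ ext Γ A)
  pair_π : ∀ {Δ Γ : C} {A : Ty Γ} (γ : Δ ⟶ Γ) (t : Tm Δ (tySub A γ)),
    pair γ t ≫ π Γ A = γ
  pair_v : ∀ {Δ Γ : C} {A : Ty Γ} (γ : Δ ⟶ Γ) (t : Tm Δ (tySub A γ)),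
    HEq (tmSub (v Γ A) (pair γ t)) t
  pair_unique : ∀ {Δ Γ : C} {A : Ty Γ} (γ : Δ ⟶ Γ) (t : Tm Δ (tySub A γ)) (m : Δ ⟶ ext Γ A),
    m ≫ π Γ A = γ → HEq (tmSub (v Γ A) m) t → m = pair γ t

/-- Display maps: the closure of the projection morphisms under identities and composition. -/
inductive CwF.Display {C : Type u} [Category.{v} C] (cwf : CwF.{w, w'} C) :
    ∀ {X Y : C}, (X ⟶ Y) → Prop
  | proj (Γ : C) (A : cwf.Ty Γ) : CwF.Display cwf (cwf.π Γ A)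
  | id (X : C) : CwF.Display cwf (𝟙 X)
  | comp {X Y Z : C} (f : X ⟶ Y) (g : Y ⟶ Z) :
      CwF.Display cwf f → CwF.Display cwf g → CwF.Display cwf (f ≫ g)

/-- A contextual category: a category with families equipped with a length function
satisfying the Cartmell/Streicher axioms. -/
structure Contextual (C : Type u) [Category.{v} C] extends CwF.{w, w'} C where
  len : C → ℕ
  len_nil : len nil = 0
  len_zero_unique : ∀ Γ : C, len Γ = 0 → Γ = nil
  len_ext : ∀ (Γ : C) (A : Ty Γ), len (ext Γ A) = len Γ + 1
  decomp : ∀ Γ : C, 0 < len Γ → ∃ (Γ' : C) (A : Ty Γ'), Γ = ext Γ' A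
  ext_inj : ∀ {Γ₁ : C} {A₁ : Ty Γ₁} {Γ₂ : C} {A₂ : Ty Γ₂},
    ext Γ₁ A₁ = ext Γ₂ A₂ → Γ₁ = Γ₂ ∧ HEq A₁ A₂

lemma CwF.tmSub_congr {C : Type u} [Category.{v} C] (cwf : CwF.{w, w'} C)
    {Δ Γ : C} {A₁ A₂ : cwf.Ty Γ} (e : A₁ = A₂) {a : cwf.Tm Γ A₁} {b : cwf.Tm Γ A₂}
    (hab : HEq a b) (γ : Δ ⟶ Γ) : HEq (cwf.tmSub a γ) (cwf.tmSub b γ) := by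
  subst e; cases hab; rfl

lemma contextual_aux {C : Type u} [Category.{v} C]
    (cc : Contextual.{w, w'} C) {Δ : C} : ∀ (n : ℕ) (Γ : C), cc.len Γ = n →
    ∀ (γ δ : Δ ⟶ Γ),
    (∀ (Θ : C) (A : cc.Ty Θ) (p : Γ ⟶ cc.ext Θ A),
      cc.toCwF.Display p →
      HEq (cc.tmSub (cc.tmSub (cc.v Θ A) p) γ) (cc.tmSub (cc.tmSub (cc.v Θ A) p) δ)) →
    γ = δ := by
  intro n
  induction n with
  | zero =>
    intro Γ hΓ γ δ _
    have := cc.len_zero_unique Γ hΓ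
    subst this
    exact cc.nil_terminal.some.hom_ext γ δ
  | succ n ih =>
    intro Γ hΓ γ δ h
    obtain ⟨Γ', A, rfl⟩ := cc.decomp Γ (by omega)
    have hΓ' : cc.len Γ' = n := by have := cc.len_ext Γ' A; omega
    have hbase : γ ≫ cc.π Γ' A = δ ≫ cc.π Γ' A := by
      apply ih Γ' hΓ'
      intro Θ B p hp
      have hp' : cc.toCwF.Display (cc.π Γ' A ≫ p) :=
        .comp _ _ (.proj _ _) hp
      have h1 := h Θ B (cc.π Γ' A ≫ p) hp'
      have e1 : HEq (cc.tmSub (cc.tmSub (cc.v Θ B) p) (γ ≫ cc.π Γ' A))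
          (cc.tmSub (cc.tmSub (cc.v Θ B) (cc.π Γ' A ≫ p)) γ) := by
        have c1 := (cc.tmSub_comp (cc.v Θ B) p (γ ≫ cc.π Γ' A)).symm
        have c2 := cc.tmSub_comp (cc.v Θ B) (cc.π Γ' A ≫ p) γ
        have c3 : HEq (cc.tmSub (cc.v Θ B) ((γ ≫ cc.π Γ' A) ≫ p))
            (cc.tmSub (cc.v Θ B) (γ ≫ (cc.π Γ' A ≫ p))) := by rw [Category.assoc]
        exact (c1.trans c3).trans c2
      have e2 : HEq (cc.tmSub (cc.tmSub (cc.v Θ B) p) (δ ≫ cc.π Γ' A))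
          (cc.tmSub (cc.tmSub (cc.v Θ B) (cc.π Γ' A ≫ p)) δ) := by
        have c1 := (cc.tmSub_comp (cc.v Θ B) p (δ ≫ cc.π Γ' A)).symm
        have c2 := cc.tmSub_comp (cc.v Θ B) (cc.π Γ' A ≫ p) δ
        have c3 : HEq (cc.tmSub (cc.v Θ B) ((δ ≫ cc.π Γ' A) ≫ p))
            (cc.tmSub (cc.v Θ B) (δ ≫ (cc.π Γ' A ≫ p))) := by rw [Category.assoc]
        exact (c1.trans c3).trans c2
      exact (e1.trans h1).trans e2.symm
    -- variable term equality
    have hid := h Γ' A (𝟙 (cc.ext Γ' A)) (.id _)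
    have hv : HEq (cc.tmSub (cc.v Γ' A) γ) (cc.tmSub (cc.v Γ' A) δ) := by
      have cg := cc.toCwF.tmSub_congr (cc.tySub_id _) (cc.tmSub_id (cc.v Γ' A)) γ
      have cd := cc.toCwF.tmSub_congr (cc.tySub_id _) (cc.tmSub_id (cc.v Γ' A)) δ
      exact (cg.symm.trans hid).trans cd
    have eTy : cc.tySub (cc.tySub A (cc.π Γ' A)) γ = cc.tySub A (γ ≫ cc.π Γ' A) :=
      (cc.tySub_comp A (cc.π Γ' A) γ).symm
    set t : cc.Tm Δ (cc.tySub A (γ ≫ cc.π Γ' A)) :=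
      cast (congrArg (cc.Tm Δ) eTy) (cc.tmSub (cc.v Γ' A) γ) with ht
    have htg : HEq (cc.tmSub (cc.v Γ' A) γ) t := (cast_heq _ _).symm
    have hγ : γ = cc.pair (γ ≫ cc.π Γ' A) t :=
      cc.pair_unique _ t γ rfl htg
    have hδ : δ = cc.pair (γ ≫ cc.π Γ' A) t :=
      cc.pair_unique _ t δ hbase.symm (hv.symm.trans htg)
    rw [hγ, hδ]

/-- In a contextual category, two parallel morphisms `γ δ : Δ ⟶ Γ` are equal as soon as
`x[γ] = x[δ]` for every variable `x` of `Γ`, where a variable of `Γ` is a term of the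
form `v[π]` for `π : Γ ⟶ (Θ, A)` a display map and `v` the universal term of the
comprehension `(Θ, A)`. -/
theorem contextual_hom_ext_on_variables {C : Type u} [Category.{v} C]
    (cc : Contextual.{w, w'} C) {Δ Γ : C} (γ δ : Δ ⟶ Γ)
    (h : ∀ (Θ : C) (A : cc.Ty Θ) (p : Γ ⟶ cc.ext Θ A),
      cc.toCwF.Display p →
      HEq (cc.tmSub (cc.tmSub (cc.v Θ A) p) γ) (cc.tmSub (cc.tmSub (cc.v Θ A) p) δ)) :
    γ = δ := by
  exact contextual_aux cc (cc.len Γ) Γ rfl γ δ h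
end

section
/- Every morphism between pasting schemes (globular sets which are globular sums of disks) is injective. -/
/-- A globular set, presented as a family of sets of `n`-cells with source and target maps
subject to the globular relations. -/
structure GlobSet : Type 1 where
  obj : ℕ → Type
  src : ∀ n, obj (n + 1) → obj n
  tgt : ∀ n, obj (n + 1) → obj n
  glob_ss : ∀ n (x : obj (n + 2)), src n (src (n + 1) x) = src n (tgt (n + 1) x)
  glob_tt : ∀ n (x : obj (n + 2)), tgt n (src (n + 1) x) = tgt n (tgt (n + 1) x)

/-- A morphism of globular sets. -/
@[ext]
structure GlobHom (X Y : GlobSet) : Type where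
  app : ∀ n, X.obj n → Y.obj n
  src_app : ∀ n x, app n (X.src n x) = Y.src n (app (n + 1) x)
  tgt_app : ∀ n x, app n (X.tgt n x) = Y.tgt n (app (n + 1) x)

namespace GlobSet

/-- The cells of a globular set (of all dimensions). -/
def Cell (X : GlobSet) : Type := Σ n, X.obj n

/-- One step of the relation `◁`: `s(x) ◁ x` and `x ◁ t(x)`. -/
inductive Step (X : GlobSet) : X.Cell → X.Cell → Prop
  | src (n : ℕ) (x : X.obj (n + 1)) : Step X ⟨n, X.src n x⟩ ⟨n + 1, x⟩
  | tgt (n : ℕ) (x : X.obj (n + 1)) : Step X ⟨n + 1, x⟩ ⟨n, X.tgt n x⟩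

/-- The relation `◁`: transitive closure of `s(x) ◁ x ◁ t(x)`. -/
def Rel (X : GlobSet) : X.Cell → X.Cell → Prop := Relation.TransGen (Step X)

/-- A globular set is `◁`-linear if `x ≠ y ↔ (x ◁ y ∨ y ◁ x)`. -/
def Linear (X : GlobSet) : Prop :=
  ∀ a b : X.Cell, a ≠ b ↔ (Rel X a b ∨ Rel X b a)

/-- Pasting schemes: the finite `◁`-linear globular sets
(by the Finster–Mimram characterization, these are exactly the globular sums of disks). -/
def IsPastingScheme (X : GlobSet) : Prop :=
  Finite X.Cell ∧ Linear X

end GlobSet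

/-! A morphism maps `◁`-steps to `◁`-steps, hence preserves `◁`. If it identified two distinct
cells of `X`, these are `◁`-comparable by linearity, so their common image would satisfy
`y ◁ y` in `Y`; but linearity of `Y` makes `◁` irreflexive. -/

namespace GlobSet

variable {X : GlobSet}

theorem Linear.trichotomous (hX : X.Linear) : Std.Trichotomous X.Rel :=
  ⟨fun a b hab hba => by_contra fun hne => ((hX a b).mp hne).elim hab hba⟩

theorem Linear.irrefl (hX : X.Linear) : Std.Irrefl X.Rel :=
  ⟨fun a haa => (hX a a).mpr (.inl haa) rfl⟩

end GlobSet

namespace GlobHom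

variable {X Y : GlobSet} (f : GlobHom X Y)

def cellMap (c : X.Cell) : Y.Cell := ⟨c.1, f.app c.1 c.2⟩

theorem step_cellMap {a b : X.Cell} (h : X.Step a b) : Y.Step (f.cellMap a) (f.cellMap b) := by
  cases h with
  | src n x => simpa only [cellMap, f.src_app] using GlobSet.Step.src n (f.app (n + 1) x)
  | tgt n x => simpa only [cellMap, f.tgt_app] using GlobSet.Step.tgt n (f.app (n + 1) x)

theorem rel_cellMap {a b : X.Cell} (h : X.Rel a b) : Y.Rel (f.cellMap a) (f.cellMap b) :=
  Relation.TransGen.lift f.cellMap (fun _ _ => f.step_cellMap) a b h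

theorem cellMap_injective (hX : X.Linear) (hY : Y.Linear) : Function.Injective f.cellMap :=
  haveI := hX.trichotomous
  haveI := hY.irrefl
  injective_of_increasing X.Rel Y.Rel f.cellMap f.rel_cellMap

end GlobHom

/-- Every morphism between pasting schemes is injective (in every dimension). -/
theorem pasting_scheme_hom_injective {X Y : GlobSet}
    (hX : X.IsPastingScheme) (hY : Y.IsPastingScheme) (f : GlobHom X Y) :
    ∀ n, Function.Injective (f.app n) := by
  intro n
  exact Function.Injective.of_comp (f := Sigma.mk n)
    ((f.cellMap_injective hX.2 hY.2).comp sigma_mk_injective)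
end

section
/- In any globular set, if x ◁ y and dim(x) > dim(y), then either t(x) = y or t(x) ◁ y, where t(x) is the target of x. -/
/-!
When `m` is below the dimensions of both ends, the two ends of a step `s(z) ◁ z` or `z ◁ t(z)`
have the same `m`-dimensional target (for `s(z) ◁ z` this is the globular identity `t ∘ s = t ∘ t`).
So the `m`-target of `a` can be carried along a chain `a ◁ y` with `dim y ≤ m < dim a` until the
chain first drops to dimension `m`; that step is a target step, which lands on the `m`-target itself.
-/

namespace GlobSet

variable (X : GlobSet)

/-- `0`-cells are fixed only to make this total. -/
def tgtCell : X.Cell → X.Cell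
  | ⟨0, x⟩ => ⟨0, x⟩
  | ⟨n + 1, x⟩ => ⟨n, X.tgt n x⟩

def tgtTo (m : ℕ) (a : X.Cell) : X.Cell := X.tgtCell^[a.1 - m] a

variable {X}

lemma tgtTo_self (n : ℕ) (z : X.obj n) : X.tgtTo n ⟨n, z⟩ = ⟨n, z⟩ := by
  show X.tgtCell^[n - n] _ = _
  rw [Nat.sub_self]
  rfl

lemma tgtTo_succ {m n : ℕ} (hmn : m ≤ n) (z : X.obj (n + 1)) :
    X.tgtTo m ⟨n + 1, z⟩ = X.tgtTo m ⟨n, X.tgt n z⟩ := by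
  show X.tgtCell^[n + 1 - m] _ = X.tgtCell^[n - m] _
  rw [show n + 1 - m = n - m + 1 by omega]
  exact Function.iterate_succ_apply _ _ _

lemma tgtTo_src_eq_tgtTo_tgt {m n : ℕ} (hmn : m ≤ n) (z : X.obj (n + 2)) :
    X.tgtTo m ⟨n + 1, X.src (n + 1) z⟩ = X.tgtTo m ⟨n + 1, X.tgt (n + 1) z⟩ := by
  rw [tgtTo_succ hmn, tgtTo_succ hmn, X.glob_tt]

lemma Step.tgtTo_eq {a b : X.Cell} (hab : X.Step a b) {m : ℕ} (ha : m < a.1) (hb : m < b.1) :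
    X.tgtTo m a = X.tgtTo m b := by
  cases hab with
  | src n z =>
    dsimp only at ha
    obtain ⟨j, rfl⟩ : ∃ j, n = j + 1 := ⟨n - 1, by omega⟩
    exact (tgtTo_src_eq_tgtTo_tgt (by omega) z).trans (tgtTo_succ (by omega) z).symm
  | tgt n z =>
    dsimp only at hb
    exact tgtTo_succ hb.le z

lemma Step.tgtTo_eq_of_le {a b : X.Cell} (hab : X.Step a b) {m : ℕ} (hb : b.1 ≤ m)
    (ha : m < a.1) : X.tgtTo m a = b := by
  cases hab with
  | src n z => dsimp only at hb ha; omega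
  | tgt n z =>
    obtain rfl : m = n := by dsimp only at hb ha; omega
    rw [tgtTo_succ le_rfl, tgtTo_self]

lemma Rel.tgtTo_reflTransGen {a y : X.Cell} (h : X.Rel a y) {m : ℕ} (hy : y.1 ≤ m)
    (ha : m < a.1) : Relation.ReflTransGen X.Step (X.tgtTo m a) y := by
  induction h using Relation.TransGen.head_induction_on with
  | single hab => rw [hab.tgtTo_eq_of_le hy ha]
  | head hab hby ih =>
    rcases lt_or_ge m _ with hb | hb
    · rw [hab.tgtTo_eq ha hb]
      exact ih hb
    · rw [hab.tgtTo_eq_of_le hb ha]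
      exact hby.to_reflTransGen

end GlobSet

/-- In any globular set, if `x ◁ y` and `dim x > dim y`, then `t(x) = y` or `t(x) ◁ y`. -/
theorem rel_target_of_dim_gt {X : GlobSet} (n : ℕ) (x : X.obj (n + 1)) (y : X.Cell)
    (h : X.Rel ⟨n + 1, x⟩ y) (hdim : y.1 < n + 1) :
    (⟨n, X.tgt n x⟩ : X.Cell) = y ∨ X.Rel ⟨n, X.tgt n x⟩ y := by
  have key := h.tgtTo_reflTransGen (Nat.le_of_lt_succ hdim) (Nat.lt_succ_self n)
  rw [GlobSet.tgtTo_succ le_rfl, GlobSet.tgtTo_self] at key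
  exact (Relation.reflTransGen_iff_eq_or_transGen.mp key).imp Eq.symm id
end
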